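/- Let k ≥ 1 be an integer and let z ∈ ℂ satisfy Re(z) ≥ 0 and z ≠ 0. Then |R̂_{k+1}(z)| < η_k · √(πk) · |T̂_k(z)|. -/

import Mathlib

open MeasureTheory Real

/-- The factor `η_k = 1 / (1 - 2 ^ (1 - 2k))`. -/
noncomputable def eta (k : ℕ) : ℝ := 1 / (1 - (2 : ℝ) ^ ((1 : ℤ) - 2 * k))

/-- The `j`-th term of Gauss's asymptotic series for `log Γ(z + 1/2)`. -/
noncomputable def That (j : ℕ) (z : ℂ) : ℂ :=
  ((Polynomial.aeval ((1 : ℝ) / 2) (Polynomial.bernoulli (2 * j)) : ℝ) : ℂ) /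
    ((2 * (j : ℂ)) * (2 * (j : ℂ) - 1) * z ^ (2 * j - 1))

/-- `Rhatnext k z` is the remainder `R̂_{k+1}(z)` after `k` terms of Gauss's series. -/
noncomputable def Rhatnext (k : ℕ) (z : ℂ) : ℂ :=
  -∫ u in Set.Ioi (0 : ℝ),
    ((Polynomial.aeval (Int.fract (u + 1 / 2)) (Polynomial.bernoulli (2 * k)) : ℝ) : ℂ) /
      ((2 * (k : ℂ)) * ((u : ℂ) + z) ^ (2 * k))

/-- `Rhat k z` is the remainder `R̂_k(z)` after `k - 1` terms of Gauss's series. -/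
noncomputable def Rhat (k : ℕ) (z : ℂ) : ℂ := That k z + Rhatnext k z

/-!
On `(0, 1)` the Fourier series of `B_{2k}` gives `|B_{2k}(x)| < |B_{2k}(0)|`, and
`B_{2k}(1/2) = -(1 - 2^{1-2k}) B_{2k}(0)`, so `|B_{2k}(0)| = η_k |B_{2k}(1/2)|`. Since
`|u + z|² ≥ u² + |z|²` when `Re z ≥ 0`, the integrand of `R̂_{k+1}(z)` is, off the countable set
where `u + 1/2 ∈ ℤ`, strictly dominated by `|B_{2k}(0)| / (2k (u² + |z|²)^k)`. Scaling turns its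
integral into `|z|^{1-2k} I_k` with `I_k = ∫₀^∞ (1 + t²)^{-k} dt`; integration by parts gives
`2k I_{k+1} = (2k - 1) I_k`, hence `(2k - 1) I_k = √π Γ(k + 1/2) / Γ(k)`, and log-convexity of `Γ`
bounds this by `√(π k)`.
-/

open Filter Topology Set

theorem abs_bernoulliFun_lt_abs_bernoulli_of_abs_cos_lt {k : ℕ} (hk : k ≠ 0) {x : ℝ}
    (hx : x ∈ Icc (0 : ℝ) 1) (hcos : |cos (2 * π * x)| < 1) :
    |bernoulliFun (2 * k) x| < |(bernoulli (2 * k) : ℝ)| := by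
  set C : ℝ := (-1 : ℝ) ^ (k + 1) * (2 * π) ^ (2 * k) / 2 / (2 * k).factorial
  have hC : 0 < |C| := abs_pos.2 (by simp [C, pi_ne_zero, Nat.factorial_ne_zero])
  have hsum_x : HasSum (fun n : ℕ => 1 / (n : ℝ) ^ (2 * k) * cos (2 * π * n * x))
      (C * bernoulliFun (2 * k) x) := hasSum_one_div_nat_pow_mul_cos hk hx
  have hsum_0 : HasSum (fun n : ℕ => 1 / (n : ℝ) ^ (2 * k)) (C * bernoulli (2 * k)) := by
    have h := hasSum_one_div_nat_pow_mul_cos hk (left_mem_Icc.2 zero_le_one)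
    change HasSum _ (C * bernoulliFun (2 * k) 0) at h
    simpa only [mul_zero, cos_zero, mul_one, bernoulliFun_eval_zero] using h
  have hsum_abs := hsum_x.summable.abs.hasSum
  have hterm (n : ℕ) :
      |1 / (n : ℝ) ^ (2 * k) * cos (2 * π * n * x)| ≤ 1 / (n : ℝ) ^ (2 * k) := by
    rw [abs_mul, abs_of_nonneg (by positivity)]
    exact mul_le_of_le_one_right (by positivity) (abs_cos_le_one _)
  have hterm_one : |1 / ((1 : ℕ) : ℝ) ^ (2 * k) * cos (2 * π * (1 : ℕ) * x)|
      < 1 / ((1 : ℕ) : ℝ) ^ (2 * k) := by simpa using hcos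
  refine lt_of_mul_lt_mul_left ?_ hC.le
  calc |C| * |bernoulliFun (2 * k) x|
      ≤ ∑' n : ℕ, |1 / (n : ℝ) ^ (2 * k) * cos (2 * π * n * x)| :=
        (abs_mul C _).symm.trans_le (hsum_x.norm_le_of_bounded hsum_abs fun _ => le_rfl)
    _ < C * bernoulli (2 * k) := hasSum_lt hterm hterm_one hsum_abs hsum_0
    _ ≤ |C| * |(bernoulli (2 * k) : ℝ)| := (le_abs_self _).trans_eq (abs_mul _ _)

theorem bernoulli_two_mul_ne_zero {k : ℕ} (hk : k ≠ 0) : (bernoulli (2 * k) : ℝ) ≠ 0 := by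
  have h := abs_bernoulliFun_lt_abs_bernoulli_of_abs_cos_lt hk (x := 4⁻¹) (by norm_num)
    (by rw [show 2 * π * 4⁻¹ = π / 2 by ring, cos_pi_div_two, abs_zero]; exact one_pos)
  exact abs_pos.1 ((abs_nonneg _).trans_lt h)

theorem two_div_two_pow_two_mul_lt_one {k : ℕ} (hk : k ≠ 0) : (2 : ℝ) / 2 ^ (2 * k) < 1 :=
  (div_lt_one (by positivity)).2 (lt_self_pow₀ one_lt_two (by omega))

theorem abs_two_div_two_pow_two_mul_sub_one {k : ℕ} (hk : k ≠ 0) :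
    |(2 : ℝ) / 2 ^ (2 * k) - 1| = 1 - 2 / 2 ^ (2 * k) := by
  rw [abs_of_neg (sub_neg.2 (two_div_two_pow_two_mul_lt_one hk)), neg_sub]

theorem abs_cos_two_pi_mul_lt_one {x : ℝ} (hx : x ∈ Ioo (0 : ℝ) 1) (hx2 : x ≠ 2⁻¹) :
    |cos (2 * π * x)| < 1 := by
  have hsin : sin (2 * π * x) ≠ 0 := by
    rw [← neg_ne_zero, ← sin_sub_pi, Ne,
      sin_eq_zero_iff_of_lt_of_lt (by nlinarith [pi_pos, hx.1]) (by nlinarith [pi_pos, hx.2])]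
    intro h
    exact hx2 (by nlinarith [pi_pos])
  rw [← sq_lt_one_iff_abs_lt_one, ← sin_sq_add_cos_sq (2 * π * x), lt_add_iff_pos_left]
  positivity

theorem abs_bernoulliFun_lt_abs_bernoulli {k : ℕ} (hk : k ≠ 0) {x : ℝ}
    (hx : x ∈ Ioo (0 : ℝ) 1) : |bernoulliFun (2 * k) x| < |(bernoulli (2 * k) : ℝ)| := by
  rcases eq_or_ne x 2⁻¹ with rfl | hx2
  · rw [bernoulliFun_eval_half, abs_mul, abs_two_div_two_pow_two_mul_sub_one hk]
    exact mul_lt_of_lt_one_left (abs_pos.2 (bernoulli_two_mul_ne_zero hk))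
      (sub_lt_self _ (by positivity))
  · exact abs_bernoulliFun_lt_abs_bernoulli_of_abs_cos_lt hk (Ioo_subset_Icc_self hx)
      (abs_cos_two_pi_mul_lt_one hx hx2)

theorem eta_mul_abs_bernoulliFun_half {k : ℕ} (hk : k ≠ 0) :
    eta k * |bernoulliFun (2 * k) 2⁻¹| = |(bernoulli (2 * k) : ℝ)| := by
  have hpow : (2 : ℝ) ^ ((1 : ℤ) - 2 * k) = 2 / 2 ^ (2 * k) := by
    rw [show (1 : ℤ) - 2 * k = 1 - ((2 * k : ℕ) : ℤ) by push_cast; ring, zpow_sub₀ two_ne_zero,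
      zpow_one, zpow_natCast]
  have hpos : (0 : ℝ) < 1 - 2 / 2 ^ (2 * k) := sub_pos.2 (two_div_two_pow_two_mul_lt_one hk)
  rw [eta, hpow, bernoulliFun_eval_half, abs_mul, abs_two_div_two_pow_two_mul_sub_one hk,
    ← mul_assoc, one_div_mul_cancel hpos.ne', one_mul]

theorem integral_lt_integral_of_ae_lt {α : Type*} [MeasurableSpace α] {μ : Measure α} (hμ : μ ≠ 0)
    {f g : α → ℝ} (hf : Integrable f μ) (hg : Integrable g μ) (hlt : ∀ᵐ x ∂μ, f x < g x) :
    ∫ x, f x ∂μ < ∫ x, g x ∂μ := by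
  rw [← sub_pos, ← integral_sub hg hf,
    integral_pos_iff_support_of_nonneg_ae (hlt.mono fun x h => (sub_pos.2 h).le) (hg.sub hf),
    pos_iff_ne_zero]
  intro h0
  have := ae_neBot.2 hμ
  obtain ⟨x, hx, hx0⟩ := (hlt.and (measure_eq_zero_iff_ae_notMem.1 h0)).exists
  exact hx0 (sub_pos.2 hx).ne'

theorem integrable_inv_one_add_sq_pow {k : ℕ} (hk : k ≠ 0) :
    Integrable fun t : ℝ => ((1 + t ^ 2) ^ k)⁻¹ := by
  refine integrable_inv_one_add_sq.mono' (by fun_prop) (ae_of_all _ fun t => ?_)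
  rw [norm_inv, norm_pow, Real.norm_of_nonneg (by positivity)]
  exact inv_anti₀ (by positivity) (le_self_pow₀ (by nlinarith) hk)

theorem hasDerivAt_mul_inv_one_add_sq_pow (k : ℕ) (t : ℝ) :
    HasDerivAt (fun t : ℝ => t * ((1 + t ^ 2) ^ k)⁻¹)
      ((1 - 2 * k) * ((1 + t ^ 2) ^ k)⁻¹ + 2 * k * ((1 + t ^ 2) ^ (k + 1))⁻¹) t := by
  have hpos : (0 : ℝ) < 1 + t ^ 2 := by positivity
  have h := (hasDerivAt_id' t).fun_mul
    ((((hasDerivAt_pow 2 t).const_add 1).fun_pow k).fun_inv (pow_ne_zero k hpos.ne'))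
  refine h.congr_deriv ?_
  rcases k with _ | k
  · simp
  · simp only [Nat.cast_ofNat, Nat.add_sub_cancel]
    field_simp
    ring

theorem tendsto_mul_inv_one_add_sq_pow_atTop {k : ℕ} (hk : k ≠ 0) :
    Tendsto (fun t : ℝ => t * ((1 + t ^ 2) ^ k)⁻¹) atTop (𝓝 0) := by
  refine squeeze_zero' (eventually_ge_atTop 0 |>.mono fun t ht => by positivity)
    (eventually_gt_atTop 0 |>.mono fun t ht => ?_) tendsto_inv_atTop_zero
  calc t * ((1 + t ^ 2) ^ k)⁻¹ ≤ t * (t * t)⁻¹ :=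
        mul_le_mul_of_nonneg_left (inv_anti₀ (by positivity)
          ((by nlinarith : t * t ≤ 1 + t ^ 2).trans (le_self_pow₀ (by nlinarith) hk))) ht.le
    _ = t⁻¹ := by field_simp

theorem integral_Ioi_inv_one_add_sq_pow_succ {k : ℕ} (hk : k ≠ 0) :
    2 * (k : ℝ) * ∫ t in Ioi (0 : ℝ), ((1 + t ^ 2) ^ (k + 1))⁻¹ =
      (2 * k - 1) * ∫ t in Ioi (0 : ℝ), ((1 + t ^ 2) ^ k)⁻¹ := by
  have hI := (integrable_inv_one_add_sq_pow hk).integrableOn (s := Ioi 0)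
  have hI' := (integrable_inv_one_add_sq_pow k.add_one_ne_zero).integrableOn (s := Ioi 0)
  have hFTC := integral_Ioi_of_hasDerivAt_of_tendsto
    (hasDerivAt_mul_inv_one_add_sq_pow k 0).continuousAt.continuousWithinAt
    (fun t _ => hasDerivAt_mul_inv_one_add_sq_pow k t) ((hI.const_mul _).add (hI'.const_mul _))
    (tendsto_mul_inv_one_add_sq_pow_atTop hk)
  rw [integral_add (hI.const_mul _) (hI'.const_mul _), integral_const_mul, integral_const_mul]
    at hFTC
  simp only [zero_mul, sub_zero] at hFTC
  linarith

theorem two_mul_sub_one_mul_integral_Ioi_inv_one_add_sq_pow {k : ℕ} (hk : k ≠ 0) :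
    (2 * k - 1) * ∫ t in Ioi (0 : ℝ), ((1 + t ^ 2) ^ k)⁻¹ = √π * Gamma (k + 1 / 2) / Gamma k := by
  induction k, Nat.one_le_iff_ne_zero.2 hk using Nat.le_induction with
  | base =>
    have hΓ : Gamma (1 + 1 / 2) = √π / 2 := by
      rw [add_comm, Gamma_add_one (by norm_num), Gamma_one_half_eq]; ring
    simp only [Nat.cast_one, pow_one, integral_Ioi_inv_one_add_sq, arctan_zero, hΓ, Gamma_one]
    linear_combination (-1 / 2 : ℝ) * mul_self_sqrt pi_pos.le
  | succ k hk1 ih =>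
    have hk0 : k ≠ 0 := Nat.one_le_iff_ne_zero.1 hk1
    have hkpos : (0 : ℝ) < k := by positivity
    rw [show (2 * ((k + 1 : ℕ) : ℝ) - 1) = (2 * k + 1) / (2 * k) * (2 * k) by
        push_cast; field_simp; ring,
      mul_assoc, integral_Ioi_inv_one_add_sq_pow_succ hk0, ih hk0, Nat.cast_add_one,
      add_right_comm, Gamma_add_one (by positivity), Gamma_add_one hkpos.ne']
    field_simp

theorem Gamma_add_half_le_sqrt_mul_Gamma {s : ℝ} (hs : 0 < s) :
    Gamma (s + 1 / 2) ≤ √s * Gamma s := by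
  have h := Gamma_mul_add_mul_le_rpow_Gamma_mul_rpow_Gamma hs (by linarith : 0 < s + 1)
    (by norm_num : (0 : ℝ) < 1 / 2) (by norm_num : (0 : ℝ) < 1 / 2) (by norm_num)
  have hΓ := Gamma_pos_of_pos hs
  rwa [show 1 / 2 * s + 1 / 2 * (s + 1) = s + 1 / 2 by ring, Gamma_add_one hs.ne',
    mul_rpow hs.le hΓ.le, mul_left_comm, ← rpow_add hΓ, add_halves, rpow_one, ← sqrt_eq_rpow]
    at h

theorem two_mul_sub_one_mul_integral_Ioi_inv_one_add_sq_pow_le {k : ℕ} (hk : k ≠ 0) :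
    (2 * k - 1) * ∫ t in Ioi (0 : ℝ), ((1 + t ^ 2) ^ k)⁻¹ ≤ √(π * k) := by
  have hkpos : (0 : ℝ) < k := by positivity
  rw [two_mul_sub_one_mul_integral_Ioi_inv_one_add_sq_pow hk, sqrt_mul pi_pos.le, mul_div_assoc]
  exact mul_le_mul_of_nonneg_left
    ((div_le_iff₀ (Gamma_pos_of_pos hkpos)).2 (Gamma_add_half_le_sqrt_mul_Gamma hkpos))
    (sqrt_nonneg π)

theorem inv_sq_add_sq_pow_eq (k : ℕ) {c : ℝ} (hc : c ≠ 0) (u : ℝ) :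
    ((u ^ 2 + c ^ 2) ^ k)⁻¹ = (c ^ (2 * k))⁻¹ * ((1 + (c⁻¹ * u) ^ 2) ^ k)⁻¹ := by
  rw [← mul_inv, pow_mul, ← mul_pow]
  congr 2
  field_simp
  ring

theorem integrable_inv_sq_add_sq_pow {k : ℕ} (hk : k ≠ 0) {c : ℝ} (hc : c ≠ 0) :
    Integrable fun u : ℝ => ((u ^ 2 + c ^ 2) ^ k)⁻¹ := by
  simp_rw [inv_sq_add_sq_pow_eq k hc]
  exact ((integrable_inv_one_add_sq_pow hk).comp_mul_left' (inv_ne_zero hc)).const_mul _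

theorem integral_Ioi_inv_sq_add_sq_pow {k : ℕ} (hk : k ≠ 0) {c : ℝ} (hc : 0 < c) :
    ∫ u in Ioi (0 : ℝ), ((u ^ 2 + c ^ 2) ^ k)⁻¹ =
      (∫ t in Ioi (0 : ℝ), ((1 + t ^ 2) ^ k)⁻¹) / c ^ (2 * k - 1) := by
  simp_rw [inv_sq_add_sq_pow_eq k hc.ne']
  rw [integral_const_mul, integral_comp_mul_left_Ioi (fun t => ((1 + t ^ 2) ^ k)⁻¹) 0
    (inv_pos.2 hc), mul_zero, inv_inv, smul_eq_mul, ← Nat.sub_add_cancel (by omega : 1 ≤ 2 * k),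
    pow_succ, Nat.add_sub_cancel]
  field_simp

theorem two_mul_natCast_sub_one_pos {k : ℕ} (hk : k ≠ 0) : (0 : ℝ) < 2 * k - 1 := by
  have : (1 : ℝ) ≤ k := Nat.one_le_cast.2 (Nat.one_le_iff_ne_zero.2 hk)
  linarith

theorem integral_Ioi_inv_sq_add_sq_pow_le {k : ℕ} (hk : k ≠ 0) {c : ℝ} (hc : 0 < c) :
    ∫ u in Ioi (0 : ℝ), ((u ^ 2 + c ^ 2) ^ k)⁻¹ ≤ √(π * k) / ((2 * k - 1) * c ^ (2 * k - 1)) := by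
  rw [integral_Ioi_inv_sq_add_sq_pow hk hc, ← div_div,
    div_le_div_iff_of_pos_right (by positivity), le_div_iff₀' (two_mul_natCast_sub_one_pos hk)]
  exact two_mul_sub_one_mul_integral_Ioi_inv_one_add_sq_pow_le hk

theorem aeval_bernoulli (n : ℕ) (x : ℝ) :
    Polynomial.aeval x (Polynomial.bernoulli n) = bernoulliFun n x := by
  rw [bernoulliFun, Polynomial.eval_map, Polynomial.aeval_def]

theorem norm_two_mul_natCast (k : ℕ) : ‖2 * (k : ℂ)‖ = 2 * k := by
  exact_mod_cast Complex.norm_natCast (2 * k)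

theorem norm_That {k : ℕ} (hk : k ≠ 0) (z : ℂ) :
    ‖That k z‖ = |bernoulliFun (2 * k) 2⁻¹| / (2 * k * (2 * k - 1) * ‖z‖ ^ (2 * k - 1)) := by
  have h2k1 : ‖2 * (k : ℂ) - 1‖ = 2 * k - 1 := by
    rw [show 2 * (k : ℂ) - 1 = ((2 * k - 1 : ℝ) : ℂ) by push_cast; ring, Complex.norm_real,
      Real.norm_of_nonneg (two_mul_natCast_sub_one_pos hk).le]
  rw [That, norm_div, Complex.norm_real, Real.norm_eq_abs, one_div, aeval_bernoulli, norm_mul,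
    norm_mul, norm_pow, norm_two_mul_natCast, h2k1]

theorem sq_add_sq_norm_le_norm_add_sq {u : ℝ} (hu : 0 ≤ u) {z : ℂ} (hz : 0 ≤ z.re) :
    u ^ 2 + ‖z‖ ^ 2 ≤ ‖(u : ℂ) + z‖ ^ 2 := by
  simp only [Complex.sq_norm, Complex.normSq_apply, Complex.add_re, Complex.add_im,
    Complex.ofReal_re, Complex.ofReal_im, zero_add]
  nlinarith [mul_nonneg hu hz]

theorem norm_Rhatnext_integrand_lt {k : ℕ} (hk : k ≠ 0) {z : ℂ} (hz : 0 ≤ z.re) {u : ℝ}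
    (hu : 0 < u) (hu' : u + 1 / 2 ∉ range Int.cast) :
    ‖((Polynomial.aeval (Int.fract (u + 1 / 2)) (Polynomial.bernoulli (2 * k)) : ℝ) : ℂ) /
        ((2 * (k : ℂ)) * ((u : ℂ) + z) ^ (2 * k))‖ <
      |(bernoulli (2 * k) : ℝ)| / (2 * k) * ((u ^ 2 + ‖z‖ ^ 2) ^ k)⁻¹ := by
  have hfract : Int.fract (u + 1 / 2) ∈ Ioo (0 : ℝ) 1 :=
    ⟨(Int.fract_nonneg _).lt_of_ne' (Int.fract_ne_zero_iff.2 hu'), Int.fract_lt_one _⟩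
  have hden : (u ^ 2 + ‖z‖ ^ 2) ^ k ≤ ‖(u : ℂ) + z‖ ^ (2 * k) := by
    rw [pow_mul]
    exact pow_le_pow_left₀ (by positivity) (sq_add_sq_norm_le_norm_add_sq hu.le hz) k
  have hk' : (0 : ℝ) < 2 * k := by positivity
  have hpos : 0 < (u ^ 2 + ‖z‖ ^ 2) ^ k := by positivity
  rw [norm_div, Complex.norm_real, Real.norm_eq_abs, aeval_bernoulli, norm_mul, norm_pow,
    norm_two_mul_natCast]
  calc |bernoulliFun (2 * k) (Int.fract (u + 1 / 2))| / (2 * k * ‖(u : ℂ) + z‖ ^ (2 * k))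
      ≤ |bernoulliFun (2 * k) (Int.fract (u + 1 / 2))| / (2 * k * (u ^ 2 + ‖z‖ ^ 2) ^ k) :=
        div_le_div_of_nonneg_left (abs_nonneg _) (by positivity)
          (mul_le_mul_of_nonneg_left hden hk'.le)
    _ < |(bernoulli (2 * k) : ℝ)| / (2 * k * (u ^ 2 + ‖z‖ ^ 2) ^ k) :=
        div_lt_div_of_pos_right (abs_bernoulliFun_lt_abs_bernoulli hk hfract) (by positivity)
    _ = |(bernoulli (2 * k) : ℝ)| / (2 * k) * ((u ^ 2 + ‖z‖ ^ 2) ^ k)⁻¹ := by ring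

theorem norm_Rhatnext_lt {k : ℕ} (hk : k ≠ 0) {z : ℂ} (hz : 0 ≤ z.re) (hz0 : z ≠ 0) :
    ‖Rhatnext k z‖ <
      |(bernoulli (2 * k) : ℝ)| / (2 * k) * ∫ u in Ioi (0 : ℝ), ((u ^ 2 + ‖z‖ ^ 2) ^ k)⁻¹ := by
  set F : ℝ → ℂ := fun u =>
    ((Polynomial.aeval (Int.fract (u + 1 / 2)) (Polynomial.bernoulli (2 * k)) : ℝ) : ℂ) /
      ((2 * (k : ℂ)) * ((u : ℂ) + z) ^ (2 * k))
  set G : ℝ → ℝ := fun u => |(bernoulli (2 * k) : ℝ)| / (2 * k) * ((u ^ 2 + ‖z‖ ^ 2) ^ k)⁻¹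
  have hS : {u : ℝ | u + 1 / 2 ∈ range Int.cast}.Countable :=
    (countable_range _).preimage (add_left_injective _)
  have hlt : ∀ᵐ u ∂volume.restrict (Ioi 0), ‖F u‖ < G u := by
    filter_upwards [ae_restrict_mem measurableSet_Ioi, hS.ae_notMem _] with u hu hu'
    exact norm_Rhatnext_integrand_lt hk hz hu hu'
  have hG : IntegrableOn G (Ioi 0) :=
    ((integrable_inv_sq_add_sq_pow hk (norm_ne_zero_iff.2 hz0)).const_mul _).integrableOn
  have hF : IntegrableOn F (Ioi 0) :=
    hG.mono' (Measurable.aestronglyMeasurable (by measurability)) (hlt.mono fun _ h => h.le)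
  calc ‖Rhatnext k z‖ = ‖∫ u in Ioi (0 : ℝ), F u‖ := norm_neg _
    _ ≤ ∫ u in Ioi (0 : ℝ), ‖F u‖ := norm_integral_le_integral_norm _
    _ < ∫ u in Ioi (0 : ℝ), G u := integral_lt_integral_of_ae_lt (by simp) hF.norm hG hlt
    _ = _ := integral_const_mul _ _

theorem abs_Rhatnext_lt_eta_sqrt_pi_k_mul (k : ℕ) (hk : 1 ≤ k) (z : ℂ)
    (hz : 0 ≤ z.re) (hz0 : z ≠ 0) :
    ‖Rhatnext k z‖ < eta k * Real.sqrt (π * k) * ‖That k z‖ := by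
  have hk0 : k ≠ 0 := Nat.one_le_iff_ne_zero.1 hk
  calc ‖Rhatnext k z‖
      < |(bernoulli (2 * k) : ℝ)| / (2 * k) * ∫ u in Ioi (0 : ℝ), ((u ^ 2 + ‖z‖ ^ 2) ^ k)⁻¹ :=
        norm_Rhatnext_lt hk0 hz hz0
    _ ≤ |(bernoulli (2 * k) : ℝ)| / (2 * k) * (√(π * k) / ((2 * k - 1) * ‖z‖ ^ (2 * k - 1))) :=
        mul_le_mul_of_nonneg_left (integral_Ioi_inv_sq_add_sq_pow_le hk0 (norm_pos_iff.2 hz0))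
          (by positivity)
    _ = eta k * √(π * k) * ‖That k z‖ := by
        have := two_mul_natCast_sub_one_pos hk0
        rw [norm_That hk0, ← eta_mul_abs_bernoulliFun_half hk0]
        field_simp
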